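/- arXiv:math/9601212 — 4 statements merged into one kernel-verified Lean document; each statement's English description precedes it below -/
import Mathlib

section
/- For every λ ≥ 1 and ε > 0 there exists κ > 0 such that for every (λ,ε)-quasi-geodesic segment γ : [a,b] → ℍ and every geodesic segment Γ₀ : [0,l] → ℍ with l = d(γ(a),γ(b)), Γ₀(0) = γ(a) and Γ₀(l) = γ(b), the Hausdorff distance (with respect to the hyperbolic metric) between the image γ([a,b]) and the image Γ₀([0,l]) is less than κ. -/
open UpperHalfPlane Set Metric
open Real

set_option maxHeartbeats 1000000

/-- A map `γ` is a `(λ, ε)`-quasi-geodesic on the set `I`: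
`λ⁻¹ |s - t| - ε ≤ d(γ s, γ t) ≤ λ |s - t| + ε` for all `s, t ∈ I`. -/
def IsQuasiGeodesicOn {X : Type*} [MetricSpace X] (lam eps : ℝ) (γ : ℝ → X) (I : Set ℝ) : Prop :=
  ∀ s ∈ I, ∀ t ∈ I,
    lam⁻¹ * |s - t| - eps ≤ dist (γ s) (γ t) ∧ dist (γ s) (γ t) ≤ lam * |s - t| + eps

lemma ptolemyC (x y z w : ℂ) :
    dist x z * dist y w ≤ dist x y * dist z w + dist x w * dist y z := by
  simp only [Complex.dist_eq]
  have h : (x - z) * (y - w) = (x - y) * (z - w) + (x - w) * (y - z) := by ring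
  calc ‖x - z‖ * ‖y - w‖
      = ‖(x - y) * (z - w) + (x - w) * (y - z)‖ := by rw [← norm_mul, h]
    _ ≤ _ := by simpa [norm_mul] using norm_add_le ((x-y)*(z-w)) ((x-w)*(y-z))

lemma ptolemy_sinh (x y z w : ℍ) :
    sinh (dist x z / 2) * sinh (dist y w / 2) ≤
      sinh (dist x y / 2) * sinh (dist z w / 2) +
      sinh (dist x w / 2) * sinh (dist y z / 2) := by
  have hx := x.im_pos; have hy := y.im_pos; have hz := z.im_pos; have hw := w.im_pos
  have key : ∀ a b : ℍ, sinh (dist a b / 2) = dist (a:ℂ) (b:ℂ) / (2 * √(a.im * b.im)) :=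
    sinh_half_dist
  have comb : ∀ p q : ℝ, 0 ≤ p → 0 ≤ q → √p * √q = √(p*q) := fun p q hp _ =>
    (Real.sqrt_mul hp q).symm
  have e1 : (2 * √(x.im * z.im)) * (2 * √(y.im * w.im)) = 4 * √(x.im*y.im*z.im*w.im) := by
    rw [show (2*√(x.im*z.im))*(2*√(y.im*w.im)) = 4*(√(x.im*z.im)*√(y.im*w.im)) by ring,
      comb _ _ (by positivity) (by positivity),
      show x.im*z.im*(y.im*w.im) = x.im*y.im*z.im*w.im by ring]
  have e2 : (2 * √(x.im * y.im)) * (2 * √(z.im * w.im)) = 4 * √(x.im*y.im*z.im*w.im) := by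
    rw [show (2*√(x.im*y.im))*(2*√(z.im*w.im)) = 4*(√(x.im*y.im)*√(z.im*w.im)) by ring,
      comb _ _ (by positivity) (by positivity),
      show x.im*y.im*(z.im*w.im) = x.im*y.im*z.im*w.im by ring]
  have e3 : (2 * √(x.im * w.im)) * (2 * √(y.im * z.im)) = 4 * √(x.im*y.im*z.im*w.im) := by
    rw [show (2*√(x.im*w.im))*(2*√(y.im*z.im)) = 4*(√(x.im*w.im)*√(y.im*z.im)) by ring,
      comb _ _ (by positivity) (by positivity),
      show x.im*w.im*(y.im*z.im) = x.im*y.im*z.im*w.im by ring]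
  rw [key, key, key, key, key, key, div_mul_div_comm, div_mul_div_comm, div_mul_div_comm,
    e1, e2, e3, ← add_div]
  exact div_le_div_of_nonneg_right (ptolemyC x y z w) (by positivity)


lemma key_real (a1 a2 b1 b2 c1 c2 : ℝ) (hb1 : 0 ≤ b1) (hb2 : 0 ≤ b2)
    (hc1 : 0 ≤ c1) (hc2 : 0 ≤ c2)
    (habs : |a1 - a2| ≤ max (b1 + b2) (c1 + c2))
    (hpt : sinh a1 * sinh a2 ≤ sinh b1 * sinh b2 + sinh c1 * sinh c2) :
    a1 + a2 ≤ max (b1 + b2) (c1 + c2) + Real.log 6 := by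
  set M := max (b1 + b2) (c1 + c2) with hM
  have hM0 : 0 ≤ M := le_trans (by linarith) (le_max_left _ _)
  have prod : ∀ u v : ℝ, sinh u * sinh v = (cosh (u+v) - cosh (u-v)) / 2 := by
    intro u v; rw [Real.cosh_add, Real.cosh_sub]; ring
  rw [prod, prod, prod] at hpt
  have hcosh1 : cosh (a1 - a2) ≤ cosh M := by
    rw [Real.cosh_le_cosh, abs_of_nonneg hM0]; exact habs
  have hcoshb : cosh (b1 + b2) ≤ cosh M := by
    rw [Real.cosh_le_cosh, abs_of_nonneg hM0, abs_of_nonneg (by linarith)]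
    exact le_max_left _ _
  have hcoshc : cosh (c1 + c2) ≤ cosh M := by
    rw [Real.cosh_le_cosh, abs_of_nonneg hM0, abs_of_nonneg (by linarith)]
    exact le_max_right _ _
  have h1b : (1:ℝ) ≤ cosh (b1 - b2) := Real.one_le_cosh _
  have h1c : (1:ℝ) ≤ cosh (c1 - c2) := Real.one_le_cosh _
  have hS : cosh (a1 + a2) ≤ 3 * cosh M := by linarith
  have l1 : exp (a1 + a2) ≤ 2 * cosh (a1 + a2) := by
    have := Real.cosh_eq (a1 + a2); linarith [Real.exp_pos (-(a1+a2))]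
  have l2 : cosh M ≤ exp M := by
    have := Real.cosh_eq M
    have := Real.exp_le_exp.mpr (neg_le_self hM0)
    linarith
  have hexp : exp (a1 + a2) ≤ exp (M + Real.log 6) := by
    rw [show exp (M + Real.log 6) = 6 * exp M by
      rw [Real.exp_add, Real.exp_log (by norm_num : (0:ℝ) < 6)]; ring]
    linarith
  linarith [Real.exp_le_exp.mp hexp]

lemma four_point (x y z w : ℍ) :
    dist x z + dist y w ≤ max (dist x y + dist z w) (dist x w + dist y z) + 2 * Real.log 6 := by
  have K1 : dist x z ≤ dist x w + dist z w := by
    rw [dist_comm z w]; exact dist_triangle x w z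
  have K2 : dist x w ≤ dist x y + dist y w := dist_triangle x y w
  have K3 : dist y w ≤ dist x y + dist x w := by
    rw [dist_comm x y]; exact dist_triangle y x w
  have K4 : dist x w ≤ dist x z + dist z w := dist_triangle x z w
  have K5 : dist x z ≤ dist x y + dist y z := dist_triangle x y z
  have K6 : dist z w ≤ dist y z + dist y w := by
    rw [dist_comm y z]; exact dist_triangle z y w
  have K7 : dist y w ≤ dist y z + dist z w := dist_triangle y z w
  have K8 : dist z w ≤ dist x z + dist x w := by
    rw [dist_comm x z]; exact dist_triangle z x w
  have habs : |dist x z / 2 - dist y w / 2| ≤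
      max (dist x y / 2 + dist z w / 2) (dist x w / 2 + dist y z / 2) := by
    rw [abs_le]
    rcases le_total (dist x y / 2 + dist z w / 2) (dist x w / 2 + dist y z / 2) with h | h
    · rw [max_eq_right h]; constructor <;> linarith
    · rw [max_eq_left h]; constructor <;> linarith
  have key := key_real (dist x z / 2) (dist y w / 2) (dist x y / 2) (dist z w / 2)
    (dist x w / 2) (dist y z / 2) (by positivity) (by positivity) (by positivity) (by positivity)
    habs (ptolemy_sinh x y z w)
  rcases le_total (dist x y / 2 + dist z w / 2) (dist x w / 2 + dist y z / 2) with h | h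
  · rw [max_eq_right h] at key
    rw [max_eq_right (by linarith : dist x y + dist z w ≤ dist x w + dist y z)]
    linarith
  · rw [max_eq_left h] at key
    rw [max_eq_left (by linarith : dist x w + dist y z ≤ dist x y + dist z w)]
    linarith

noncomputable def gp (w x y : ℍ) : ℝ := (dist w x + dist w y - dist x y) / 2

lemma gp_hyp (w x y z : ℍ) : min (gp w x y) (gp w y z) - Real.log 6 ≤ gp w x z := by
  have h := four_point x y z w
  have c1 : dist y w = dist w y := dist_comm y w
  have c2 : dist z w = dist w z := dist_comm z w
  have c3 : dist x w = dist w x := dist_comm x w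
  unfold gp
  rcases max_cases (dist x y + dist z w) (dist x w + dist y z) with ⟨he, _⟩ | ⟨he, _⟩ <;>
    rw [he] at h
  · exact le_trans (sub_le_sub_right (min_le_left _ _) _) (by linarith)
  · exact le_trans (sub_le_sub_right (min_le_right _ _) _) (by linarith)

lemma gp_chain (w : ℍ) : ∀ k : ℕ, ∀ c : ℕ → ℍ, ∀ N : ℕ, 1 ≤ N → N ≤ 2^k → ∀ m : ℝ,
    (∀ i < N, m ≤ gp w (c i) (c (i+1))) → m - k * Real.log 6 ≤ gp w (c 0) (c N) := by
  have hlog6 : (0:ℝ) ≤ Real.log 6 := Real.log_nonneg (by norm_num)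
  intro k
  induction k with
  | zero =>
    intro c N hN1 hN2 m hm
    interval_cases N
    simpa using hm 0 (by norm_num)
  | succ k ih =>
    intro c N hN1 hN2 m hm
    by_cases h : N ≤ 2^k
    · have := ih c N hN1 h m hm
      have : m - k * Real.log 6 ≤ gp w (c 0) (c N) := this
      push_cast
      nlinarith
    · push_neg at h
      set mid := 2^k with hmid
      have hmid1 : 1 ≤ mid := Nat.one_le_two_pow
      have hmidN : mid < N := h
      have h1 := ih c mid hmid1 le_rfl m (fun i hi => hm i (lt_trans hi hmidN))
      have hpow : 2^(k+1) = 2^k + 2^k := by rw [pow_succ]; omega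
      have h2 : m - k * Real.log 6 ≤ gp w (c mid) (c N) := by
        have := ih (fun i => c (mid + i)) (N - mid) (by omega) (by omega) m (fun i hi => by
          have := hm (mid + i) (by omega)
          simpa [Nat.add_assoc] using this)
        simpa [Nat.add_sub_cancel' (le_of_lt hmidN)] using this
      have h3 := gp_hyp w (c 0) (c mid) (c N)
      have hmin : m - k * Real.log 6 ≤ min (gp w (c 0) (c mid)) (gp w (c mid) (c N)) :=
        le_min h1 h2
      push_cast
      linarith

noncomputable def rho0 (lam eps : ℝ) : ℝ :=
  2 * (1 + (lam + eps)/2 + Real.log 6 + (lam*(2+eps)+3)/(2*(6*lam)) +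
    (Real.log 6 / Real.log 2) * Real.log (2*(6*lam)*(Real.log 6 / Real.log 2)))

lemma dir1 (lam eps : ℝ) (hlam : 1 ≤ lam) (heps : 0 < eps)
    (a b l : ℝ) (γ Γ₀ : ℝ → ℍ) (hab : a ≤ b)
    (hqg : IsQuasiGeodesicOn lam eps γ (Icc a b))
    (hΓ : ∀ s ∈ Icc (0:ℝ) l, ∀ t ∈ Icc (0:ℝ) l, dist (Γ₀ s) (Γ₀ t) = |s - t|)
    (hl0 : 0 ≤ l)
    (h0 : Γ₀ 0 = γ a) (hle : Γ₀ l = γ b) :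
    ∀ t ∈ Icc (0:ℝ) l, infDist (Γ₀ t) (γ '' Icc a b) ≤ rho0 lam eps := by
  set S := γ '' Icc a b with hS
  have hSne : S.Nonempty := ⟨γ a, mem_image_of_mem γ (left_mem_Icc.mpr hab)⟩
  have h0l : (0:ℝ) ∈ Icc (0:ℝ) l := left_mem_Icc.mpr hl0
  have hll : l ∈ Icc (0:ℝ) l := right_mem_Icc.mpr hl0
  -- the sup of infDist over the geodesic
  set R := (fun t => infDist (Γ₀ t) S) '' Icc 0 l with hR
  have hRne : R.Nonempty := ⟨_, mem_image_of_mem _ h0l⟩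
  have hRbdd : BddAbove R := by
    refine ⟨l, fun r hr => ?_⟩
    obtain ⟨t, ht, rfl⟩ := hr
    calc infDist (Γ₀ t) S ≤ dist (Γ₀ t) (γ a) :=
          infDist_le_dist_of_mem (mem_image_of_mem γ (left_mem_Icc.mpr hab))
      _ = |t - 0| := by rw [← h0, hΓ t ht 0 h0l]
      _ ≤ l := by rw [sub_zero, abs_of_nonneg ht.1]; exact ht.2
  set ρ := sSup R with hρ
  have hρub : ∀ t ∈ Icc (0:ℝ) l, infDist (Γ₀ t) S ≤ ρ := fun t ht =>
    le_csSup hRbdd (mem_image_of_mem _ ht)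
  have hρ0 : 0 ≤ ρ := le_trans (infDist_nonneg) (hρub 0 h0l)
  suffices hmain : ρ ≤ rho0 lam eps by
    intro t ht; exact le_trans (hρub t ht) hmain
  -- pick a near-extremal point
  obtain ⟨r, hrR, hr⟩ := exists_lt_of_lt_csSup hRne (show ρ - 1 < ρ by linarith)
  obtain ⟨t, ht, hrt⟩ := hrR
  set x := Γ₀ t with hx
  have hrt' : infDist (Γ₀ t) S = r := hrt
  have hfarS : ∀ s ∈ Icc a b, ρ - 1 ≤ dist x (γ s) := by
    intro s hs
    have h2 : ρ - 1 < infDist (Γ₀ t) S := by rw [hrt']; exact hr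
    exact le_of_lt (lt_of_lt_of_le h2 (infDist_le_dist_of_mem (mem_image_of_mem γ hs)))
  set u := min (2*ρ) t with hu
  set u' := min (2*ρ) (l - t) with hu'
  have hu0 : 0 ≤ u := le_min (by linarith) ht.1
  have hu'0 : 0 ≤ u' := le_min (by linarith) (by linarith [ht.2])
  have hut : u ≤ t := by rw [hu]; exact min_le_right _ _
  have hu2ρ : u ≤ 2*ρ := by rw [hu]; exact min_le_left _ _
  have hu't : u' ≤ l - t := by rw [hu']; exact min_le_right _ _
  have hu'2ρ : u' ≤ 2*ρ := by rw [hu']; exact min_le_left _ _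
  have htu : t - u ∈ Icc (0:ℝ) l := ⟨by linarith, by linarith [ht.2]⟩
  have htu' : t + u' ∈ Icc (0:ℝ) l := ⟨by linarith [ht.1], by linarith⟩
  set y := Γ₀ (t - u) with hy
  set z := Γ₀ (t + u') with hz
  have hdxy : dist x y = u := by
    rw [hx, hy, hΓ t ht (t-u) htu]; rw [show t - (t - u) = u by ring, abs_of_nonneg hu0]
  have hdxz : dist x z = u' := by
    rw [hx, hz, hΓ t ht (t+u') htu']; rw [show t - (t + u') = -u' by ring, abs_neg,
      abs_of_nonneg hu'0]
  have hdyz : dist y z = u + u' := by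
    rw [hy, hz, hΓ (t-u) htu (t+u') htu']
    rw [show t - u - (t + u') = -(u + u') by ring, abs_neg, abs_of_nonneg (by linarith)]
  have hgpyz : gp x y z = 0 := by simp only [gp]; rw [hdxy, hdxz, hdyz]; ring
  -- choose near points on the quasi-geodesic for y and z
  have hside : ∀ t' ∈ Icc (0:ℝ) l, (Γ₀ t' = γ a ∨ Γ₀ t' = γ b ∨ dist x (Γ₀ t') = 2*ρ) →
      ∃ s' ∈ Icc a b, dist (Γ₀ t') (γ s') ≤ ρ + 1 ∧ ρ - 1 ≤ gp x (Γ₀ t') (γ s') := by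
    intro t' ht' hcase
    rcases hcase with hc | hc | hc
    · refine ⟨a, left_mem_Icc.mpr hab, ?_, ?_⟩
      · rw [hc]; simp; linarith
      · simp only [gp]; rw [hc, dist_self]
        have := hfarS a (left_mem_Icc.mpr hab)
        linarith
    · refine ⟨b, right_mem_Icc.mpr hab, ?_, ?_⟩
      · rw [hc]; simp; linarith
      · simp only [gp]; rw [hc, dist_self]
        have := hfarS b (right_mem_Icc.mpr hab)
        linarith
    · have : infDist (Γ₀ t') S < ρ + 1 := lt_of_le_of_lt (hρub t' ht') (by linarith)
      obtain ⟨p, hpS, hp⟩ := (infDist_lt_iff hSne).mp this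
      obtain ⟨s', hs', rfl⟩ := hpS
      refine ⟨s', hs', le_of_lt hp, ?_⟩
      simp only [gp]; rw [hc]
      have := hfarS s' hs'
      linarith [le_of_lt hp]
  have hyside : ∃ s' ∈ Icc a b, dist y (γ s') ≤ ρ + 1 ∧ ρ - 1 ≤ gp x y (γ s') := by
    apply hside (t - u) htu
    rcases le_total (2*ρ) t with hcase | hcase
    · right; right
      rw [← hy, hdxy, hu, min_eq_left hcase]
    · left
      rw [show t - u = 0 by rw [hu, min_eq_right hcase, sub_self], h0]
  have hzside : ∃ s' ∈ Icc a b, dist z (γ s') ≤ ρ + 1 ∧ ρ - 1 ≤ gp x z (γ s') := by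
    apply hside (t + u') htu'
    rcases le_total (2*ρ) (l - t) with hcase | hcase
    · right; right
      rw [← hz, hdxz, hu', min_eq_left hcase]
    · right; left
      rw [show t + u' = l by rw [hu', min_eq_right hcase]; ring, hle]
  obtain ⟨s₁, hs₁, hys₁, hgp₁⟩ := hyside
  obtain ⟨s₂, hs₂, hzs₂, hgp₂⟩ := hzside
  -- the grid from s₁ to s₂
  set D : ℝ := s₂ - s₁ with hD
  set K : ℕ := ⌈|D|⌉₊ with hK
  have hDK : |D| ≤ K := Nat.le_ceil _
  set σ : ℕ → ℝ := fun i => s₁ + ((i:ℝ)/K) * D with hσ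
  have hσ0 : σ 0 = s₁ := by simp [hσ]
  have hσK : σ K = s₂ := by
    rcases Nat.eq_zero_or_pos K with hK0 | hK0
    · have : |D| ≤ 0 := by rw [hK0] at hDK; exact_mod_cast hDK
      have hD0 : D = 0 := abs_eq_zero.mp (le_antisymm this (abs_nonneg _))
      simp [hσ, hD0, hD]
      linarith [sub_eq_zero.mp (hD ▸ hD0)]
    · have hKne : (K:ℝ) ≠ 0 := Nat.cast_ne_zero.mpr (Nat.pos_iff_ne_zero.mp hK0)
      simp [hσ, div_self hKne, hD]
  have hσmem : ∀ i ≤ K, σ i ∈ Icc a b := by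
    intro i hi
    rcases Nat.eq_zero_or_pos K with hK0 | hK0
    · have : i = 0 := by omega
      subst this
      rw [hσ0]; exact hs₁
    · have hKpos : (0:ℝ) < K := by exact_mod_cast hK0
      have hc0 : 0 ≤ (i:ℝ)/K := by positivity
      have hc1 : (i:ℝ)/K ≤ 1 := by
        rw [div_le_one hKpos]; exact_mod_cast hi
      have heq : σ i = (1 - (i:ℝ)/K) * s₁ + ((i:ℝ)/K) * s₂ := by rw [hσ, hD]; ring
      constructor
      · rw [heq]; nlinarith [hs₁.1, hs₂.1]
      · rw [heq]; nlinarith [hs₁.2, hs₂.2]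
  have hstep : ∀ i, i + 1 ≤ K → dist (γ (σ i)) (γ (σ (i+1))) ≤ lam + eps := by
    intro i hi
    have h1 := (hqg (σ i) (hσmem i (by omega)) (σ (i+1)) (hσmem (i+1) hi)).2
    have h2 : |σ i - σ (i+1)| ≤ 1 := by
      have hKpos : (0:ℝ) < K := by exact_mod_cast (by omega : 0 < K)
      have heq2 : σ i - σ (i+1) = -(D / K) := by
        simp only [hσ]
        push_cast
        rw [add_div]
        ring
      rw [heq2, abs_neg, abs_div, abs_of_nonneg (le_of_lt hKpos), div_le_one hKpos]
      exact hDK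
    have hlam0' : (0:ℝ) ≤ lam := by linarith
    calc dist (γ (σ i)) (γ (σ (i+1))) ≤ lam * |σ i - σ (i+1)| + eps := h1
      _ ≤ lam * 1 + eps := add_le_add_left (mul_le_mul_of_nonneg_left h2 hlam0') eps
      _ = lam + eps := by ring
  -- the chain
  set N : ℕ := K + 2 with hN
  set c : ℕ → ℍ := fun i => if i = 0 then y else if i ≤ K + 1 then γ (σ (i-1)) else z with hc
  have hc0 : c 0 = y := by simp [hc]
  have hcN : c N = z := by simp [hc, hN]
  have hcmid : ∀ i, 1 ≤ i → i ≤ K + 1 → c i = γ (σ (i-1)) := by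
    intro i h1 h2; simp [hc, Nat.pos_iff_ne_zero.mp h1, h2]
  set m : ℝ := ρ - 1 - (lam + eps)/2 with hm
  have hedges : ∀ i < N, m ≤ gp x (c i) (c (i+1)) := by
    intro i hi
    rcases Nat.eq_zero_or_pos i with rfl | hi1
    · rw [hc0, hcmid 1 le_rfl (by omega)]
      simp only [Nat.sub_self]
      rw [hσ0]
      have : ρ - 1 ≤ gp x y (γ s₁) := hgp₁
      rw [hm]; linarith
    · by_cases hiK : i ≤ K
      · rw [hcmid i hi1 (by omega), hcmid (i+1) (by omega) (by omega)]
        have hi1' : i + 1 - 1 = i := by omega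
        rw [hi1']
        have hd1 := hfarS (σ (i-1)) (hσmem (i-1) (by omega))
        have hd2 := hfarS (σ i) (hσmem i hiK)
        have hst : dist (γ (σ (i-1))) (γ (σ i)) ≤ lam + eps := by
          have := hstep (i-1) (by omega)
          rwa [show i - 1 + 1 = i by omega] at this
        simp only [gp, hm]; linarith
      · have hieq : i = K + 1 := by omega
        subst hieq
        rw [hcmid (K+1) (by omega) le_rfl, show K + 1 + 1 = N by omega, hcN]
        simp only [Nat.add_sub_cancel]
        rw [hσK]
        have : ρ - 1 ≤ gp x z (γ s₂) := hgp₂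
        have hcomm : gp x z (γ s₂) = gp x (γ s₂) z := by simp only [gp, dist_comm (γ s₂) z]; ring
        rw [hm]; rw [hcomm] at this; linarith
  -- apply the chain lemma
  set k : ℕ := Nat.clog 2 N with hk
  have hN2 : 2 ≤ N := by omega
  have hNk : N ≤ 2^k := Nat.le_pow_clog one_lt_two N
  have hchain := gp_chain x k c N (by omega) hNk m hedges
  rw [hc0, hcN, hgpyz] at hchain
  -- bound on N
  have hlam0 : (0:ℝ) < lam := by linarith
  have hdist12 : dist (γ s₁) (γ s₂) ≤ 6*ρ + 2 := by
    have t1 : dist (γ s₁) (γ s₂) ≤ dist (γ s₁) y + dist y (γ s₂) := dist_triangle _ _ _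
    have t2 : dist y (γ s₂) ≤ dist y x + dist x (γ s₂) := dist_triangle _ _ _
    have t3 : dist x (γ s₂) ≤ dist x z + dist z (γ s₂) := dist_triangle _ _ _
    have e1 : dist (γ s₁) y = dist y (γ s₁) := dist_comm _ _
    have e2 : dist y x = dist x y := dist_comm _ _
    linarith [hdxy, hdxz, hys₁, hzs₂, hu2ρ, hu'2ρ]
  have hD12 : |D| ≤ lam * (6*ρ + 2) + lam * eps := by
    have hlow := (hqg s₂ hs₂ s₁ hs₁).1
    have : lam⁻¹ * |s₂ - s₁| ≤ dist (γ s₂) (γ s₁) + eps := by linarith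
    have h3 : |s₂ - s₁| ≤ lam * (dist (γ s₂) (γ s₁) + eps) := by
      rw [← mul_le_mul_iff_right₀ (show (0:ℝ) < lam⁻¹ by positivity)]
      calc lam⁻¹ * |s₂ - s₁| ≤ dist (γ s₂) (γ s₁) + eps := this
        _ = lam⁻¹ * (lam * (dist (γ s₂) (γ s₁) + eps)) := by
            field_simp
    rw [hD]
    have e3 : dist (γ s₂) (γ s₁) = dist (γ s₁) (γ s₂) := dist_comm _ _
    nlinarith [h3, hdist12]
  have hNρ : (N:ℝ) ≤ 6*lam*ρ + (lam*(2+eps) + 3) := by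
    have hKlt : (K:ℝ) < |D| + 1 := Nat.ceil_lt_add_one (abs_nonneg _)
    have : (N:ℝ) = (K:ℝ) + 2 := by rw [hN]; push_cast; ring
    rw [this]; nlinarith [hD12]
  -- bound on k
  have hk1 : 1 ≤ k := Nat.clog_pos one_lt_two hN2
  have hkb : 2^(k-1) < N := Nat.pow_pred_clog_lt_self one_lt_two (x := N) (by omega)
  set W : ℝ := 6*lam*ρ + (lam*(2+eps) + 3) with hW
  have hWpos : 0 < W := by
    rw [hW]
    have h6 : (0:ℝ) ≤ 6*lam*ρ := mul_nonneg (mul_nonneg (by norm_num) (le_of_lt hlam0)) hρ0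
    nlinarith [h6, heps, hlam0]
  have hlog2 : (0:ℝ) < Real.log 2 := Real.log_pos one_lt_two
  have hlog6 : (0:ℝ) < Real.log 6 := Real.log_pos (by norm_num)
  have hklog : ((k:ℝ) - 1) * Real.log 2 ≤ Real.log W := by
    have h2k : ((2:ℝ))^(k-1) < (N:ℝ) := by exact_mod_cast hkb
    have hle : ((2:ℝ))^(k-1) ≤ W := le_trans (le_of_lt h2k) hNρ
    have hmono : Real.log ((2:ℝ)^(k-1)) ≤ Real.log W :=
      (Real.log_le_log_iff (by positivity) hWpos).mpr hle
    rw [Real.log_pow] at hmono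
    have hc : ((k - 1 : ℕ):ℝ) = (k:ℝ) - 1 := by
      push_cast [Nat.cast_sub hk1]; ring
    rw [hc] at hmono
    exact hmono
  set δ' : ℝ := Real.log 6 / Real.log 2 with hδ'
  have hδ'pos : 0 < δ' := by positivity
  have hkW : (k:ℝ) ≤ Real.log W / Real.log 2 + 1 := by
    rw [div_add' _ _ _ (ne_of_gt hlog2), le_div_iff₀ hlog2]
    linarith only [hklog, hlog2]
  have hchain2 : ρ - 1 - (lam + eps)/2 ≤ δ' * Real.log W + Real.log 6 := by
    have hklog6 : (k:ℝ) * Real.log 6 ≤ (Real.log W / Real.log 2 + 1) * Real.log 6 :=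
      mul_le_mul_of_nonneg_right hkW (le_of_lt hlog6)
    have he : (Real.log W / Real.log 2 + 1) * Real.log 6 = δ' * Real.log W + Real.log 6 := by
      rw [hδ']; ring
    rw [he] at hklog6
    rw [hm] at hchain
    linarith only [hklog6, hchain, hlog6]
  set M₀ : ℝ := 2*(6*lam)*δ' with hM₀
  have hM₀pos : 0 < M₀ := by rw [hM₀]; positivity
  have hlogW : Real.log W ≤ W/M₀ + Real.log M₀ := by
    have hd := Real.log_le_sub_one_of_pos (div_pos hWpos hM₀pos)
    rw [Real.log_div (ne_of_gt hWpos) (ne_of_gt hM₀pos)] at hd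
    linarith only [hd]
  have hδ'W : δ' * (W/M₀) = ρ/2 + (lam*(2+eps) + 3)/(2*(6*lam)) := by
    rw [hM₀, hW]
    field_simp
  have hfin : ρ - 1 - (lam + eps)/2 ≤ ρ/2 + (lam*(2+eps) + 3)/(2*(6*lam)) +
      δ' * Real.log M₀ + Real.log 6 := by
    have h5 := mul_le_mul_of_nonneg_left hlogW (le_of_lt hδ'pos)
    rw [mul_add] at h5
    rw [hδ'W] at h5
    linarith only [h5, hchain2]
  have hρhalf : ρ/2 ≤ 1 + (lam + eps)/2 + Real.log 6 + (lam*(2+eps)+3)/(2*(6*lam)) +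
      δ' * Real.log M₀ := by linarith only [hfin]
  simp only [rho0]
  rw [← hδ', ← hM₀]
  linarith only [hρhalf]

lemma rho0_pos (lam eps : ℝ) (hlam : 1 ≤ lam) (heps : 0 < eps) : 0 < rho0 lam eps := by
  have h2 : (0:ℝ) < Real.log 2 := Real.log_pos one_lt_two
  have h6 : Real.log 2 ≤ Real.log 6 := Real.log_le_log (by norm_num) (by norm_num)
  have hδ'1 : (1:ℝ) ≤ Real.log 6 / Real.log 2 := (le_div_iff₀ h2).mpr (by linarith)
  have hM1 : (1:ℝ) ≤ 2*(6*lam)*(Real.log 6 / Real.log 2) := by nlinarith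
  have hlogM : 0 ≤ Real.log (2*(6*lam)*(Real.log 6 / Real.log 2)) := Real.log_nonneg hM1
  have hq : (0:ℝ) ≤ (lam*(2+eps)+3)/(2*(6*lam)) := by positivity
  have : (0:ℝ) ≤ (Real.log 6 / Real.log 2) * Real.log (2*(6*lam)*(Real.log 6 / Real.log 2)) := by
    apply mul_nonneg (by positivity) hlogM
  rw [rho0]
  nlinarith [h2, h6]

lemma walk (P : ℕ) (ψ : ℕ → ℝ) (aa bb s G : ℝ) (hψ0 : ψ 0 = aa) (hψP : ψ P = bb)
    (hgap : ∀ j < P, |ψ (j+1) - ψ j| ≤ G) (hsa : aa ≤ s) (hsb : s ≤ bb) (hG : 0 ≤ G) :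
    ∃ j ≤ P, |s - ψ j| ≤ G := by
  set F := (Finset.range (P+1)).filter (fun j => ψ j ≤ s) with hF
  have h0F : (0:ℕ) ∈ F := by
    rw [hF, Finset.mem_filter]
    exact ⟨Finset.mem_range.mpr (by omega), by rw [hψ0]; exact hsa⟩
  have hFne : F.Nonempty := ⟨0, h0F⟩
  set j := F.max' hFne with hj
  have hjF : j ∈ F := F.max'_mem hFne
  have hjP : j ≤ P := by
    have := (Finset.mem_filter.mp hjF).1
    rw [Finset.mem_range] at this
    omega
  have hjs : ψ j ≤ s := (Finset.mem_filter.mp hjF).2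
  refine ⟨j, hjP, ?_⟩
  by_cases hjeq : j = P
  · have : s ≤ ψ j := by rw [hjeq, hψP]; exact hsb
    rw [abs_of_nonneg (by linarith)]
    linarith
  · have hjlt : j < P := lt_of_le_of_ne hjP hjeq
    have hnot : ¬ (ψ (j+1) ≤ s) := by
      intro hcon
      have hmem : j + 1 ∈ F := by
        rw [hF, Finset.mem_filter]
        exact ⟨Finset.mem_range.mpr (by omega), hcon⟩
      have := F.le_max' (j+1) hmem
      omega
    push_neg at hnot
    have hg := hgap j hjlt
    rw [abs_le] at hg
    rw [abs_of_nonneg (by linarith)]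
    linarith

/-- **Stability of quasi-geodesics in the hyperbolic plane (segments).**
For every `λ ≥ 1` and `ε > 0` there is `κ > 0` such that every
`(λ, ε)`-quasi-geodesic segment `γ : [a, b] → ℍ` is within Hausdorff distance `κ`
of the geodesic segment `Γ₀ : [0, l] → ℍ` joining its endpoints
(where `l = d(γ a, γ b)`, `Γ₀ 0 = γ a`, `Γ₀ l = γ b`). -/
theorem quasigeodesic_segment_stability :
    ∀ lam : ℝ, 1 ≤ lam → ∀ eps : ℝ, 0 < eps → ∃ κ : ℝ, 0 < κ ∧
      ∀ (a b l : ℝ) (γ Γ₀ : ℝ → ℍ), a ≤ b →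
        IsQuasiGeodesicOn lam eps γ (Icc a b) →
        l = dist (γ a) (γ b) →
        (∀ s ∈ Icc (0:ℝ) l, ∀ t ∈ Icc (0:ℝ) l, dist (Γ₀ s) (Γ₀ t) = |s - t|) →
        Γ₀ 0 = γ a → Γ₀ l = γ b →
        hausdorffDist (γ '' Icc a b) (Γ₀ '' Icc (0:ℝ) l) < κ := by
  intro lam hlam eps heps
  have hlam0 : (0:ℝ) < lam := by linarith
  set ρ' : ℝ := rho0 lam eps + 1 with hρ'
  have hρ'pos : 0 < ρ' := by have := rho0_pos lam eps hlam heps; linarith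
  set G : ℝ := lam * (2*ρ' + 1 + eps) with hG
  have hGpos : 0 < G := by rw [hG]; positivity
  set r : ℝ := rho0 lam eps + (lam * G + eps + ρ') with hr
  have hrpos : 0 < r := by
    have := rho0_pos lam eps hlam heps
    rw [hr]; positivity
  refine ⟨r + 1, by linarith, ?_⟩
  intro a b l γ Γ₀ hab hqg hl hΓ h0 hle
  have hl0 : 0 ≤ l := hl ▸ dist_nonneg
  set S := γ '' Icc a b with hS
  set T := Γ₀ '' Icc (0:ℝ) l with hT
  have hSne : S.Nonempty := ⟨γ a, mem_image_of_mem γ (left_mem_Icc.mpr hab)⟩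
  have h0l : (0:ℝ) ∈ Icc (0:ℝ) l := left_mem_Icc.mpr hl0
  have hll : l ∈ Icc (0:ℝ) l := right_mem_Icc.mpr hl0
  have hd1 := dir1 lam eps hlam heps a b l γ Γ₀ hab hqg hΓ hl0 h0 hle
  -- choose near points
  have hchoice : ∀ t : ℝ, t ∈ Icc (0:ℝ) l → ∃ s', s' ∈ Icc a b ∧ dist (Γ₀ t) (γ s') ≤ ρ' := by
    intro t ht
    have : infDist (Γ₀ t) S < ρ' := lt_of_le_of_lt (hd1 t ht) (by rw [hρ']; linarith)
    obtain ⟨p, hpS, hp⟩ := (infDist_lt_iff hSne).mp this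
    obtain ⟨s', hs', rfl⟩ := hpS
    exact ⟨s', hs', le_of_lt hp⟩
  choose! φ hφmem hφd using hchoice
  -- the grid
  set Nl : ℕ := ⌈l⌉₊ with hNl
  set τ : ℕ → ℝ := fun i => min (i:ℝ) l with hτ
  have hτmem : ∀ i, τ i ∈ Icc (0:ℝ) l := fun i =>
    ⟨le_min (Nat.cast_nonneg i) hl0, min_le_right _ _⟩
  have hτ0 : τ 0 = 0 := by simp [hτ, hl0]
  have hτN : τ Nl = l := by
    rw [hτ]; exact min_eq_right (Nat.le_ceil l)
  have hτstep : ∀ i : ℕ, τ (i+1) - τ i ≤ 1 ∧ 0 ≤ τ (i+1) - τ i := by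
    intro i
    constructor
    · rcases le_total ((i:ℝ)) l with h | h
      · have h1 : τ i = (i:ℝ) := min_eq_left h
        have h2 : τ (i+1) ≤ (i:ℝ) + 1 := by
          rw [hτ]; push_cast; exact min_le_left _ _
        rw [h1]; linarith
      · have h1 : τ i = l := min_eq_right h
        have h2 : τ (i+1) = l := min_eq_right (by push_cast; linarith)
        rw [h1, h2]; norm_num
    · have : τ i ≤ τ (i+1) := by
        apply min_le_min _ le_rfl
        push_cast; linarith
      linarith
  -- the parameter chain
  set P : ℕ := Nl + 2 with hP
  set ψ : ℕ → ℝ := fun j => if j = 0 then a else if j ≤ Nl + 1 then φ (τ (j-1)) else b with hψ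
  have hψ0 : ψ 0 = a := by simp [hψ]
  have hψP : ψ P = b := by simp [hψ, hP]
  have hψmem : ∀ j, ψ j ∈ Icc a b := by
    intro j
    simp only [hψ]
    split_ifs
    · exact left_mem_Icc.mpr hab
    · exact hφmem _ (hτmem _)
    · exact right_mem_Icc.mpr hab
  -- distance between consecutive γ-values bounds parameter gaps
  have hgapgen : ∀ p ∈ Icc a b, ∀ q ∈ Icc a b, ∀ rr : ℝ, dist (γ p) (γ q) ≤ rr →
      |q - p| ≤ lam * (rr + eps) := by
    intro p hp q hq rr hd
    have hlow := (hqg q hq p hp).1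
    have hcomm : dist (γ q) (γ p) = dist (γ p) (γ q) := dist_comm _ _
    have h1 : lam⁻¹ * |q - p| ≤ rr + eps := by linarith [hlow, hcomm, hd]
    calc |q - p| = lam * (lam⁻¹ * |q - p|) := by field_simp
      _ ≤ lam * (rr + eps) := mul_le_mul_of_nonneg_left h1 (le_of_lt hlam0)
  have hγτ : ∀ i : ℕ, dist (Γ₀ (τ i)) (γ (φ (τ i))) ≤ ρ' := fun i => hφd _ (hτmem i)
  have hgap : ∀ j < P, |ψ (j+1) - ψ j| ≤ G := by
    intro j hj
    rcases Nat.eq_zero_or_pos j with rfl | hj1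
    · have e1 : ψ 1 = φ (τ 0) := by norm_num [hψ]
      have e0 : ψ 0 = a := hψ0
      rw [e1, e0]
      have hd : dist (γ a) (γ (φ (τ 0))) ≤ ρ' := by
        have h2 := hγτ 0
        have hg : Γ₀ (τ 0) = γ a := by rw [hτ0, h0]
        rwa [hg] at h2
      have := hgapgen a (left_mem_Icc.mpr hab) (φ (τ 0)) (hφmem _ (hτmem 0)) ρ' hd
      rw [hG]
      have : |φ (τ 0) - a| ≤ lam * (ρ' + eps) := this
      nlinarith [hρ'pos, hlam0]
    · by_cases hjle : j ≤ Nl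
      · have e1 : ψ j = φ (τ (j-1)) := by
          have : j ≠ 0 := by omega
          simp [hψ, this, show j ≤ Nl + 1 by omega]
        have e2 : ψ (j+1) = φ (τ j) := by
          simp [hψ, show j + 1 ≤ Nl + 1 by omega]
        rw [e1, e2]
        have hdd : dist (γ (φ (τ (j-1)))) (γ (φ (τ j))) ≤ 2*ρ' + 1 := by
          have t1 : dist (γ (φ (τ (j-1)))) (γ (φ (τ j))) ≤
              dist (γ (φ (τ (j-1)))) (Γ₀ (τ (j-1))) + dist (Γ₀ (τ (j-1))) (Γ₀ (τ j)) +
              dist (Γ₀ (τ j)) (γ (φ (τ j))) := dist_triangle4 _ _ _ _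
          have t2 : dist (γ (φ (τ (j-1)))) (Γ₀ (τ (j-1))) ≤ ρ' := by
            rw [dist_comm]; exact hγτ (j-1)
          have t3 : dist (Γ₀ (τ (j-1))) (Γ₀ (τ j)) ≤ 1 := by
            rw [hΓ (τ (j-1)) (hτmem _) (τ j) (hτmem _)]
            have := hτstep (j-1)
            rw [show j - 1 + 1 = j by omega] at this
            rw [abs_le]
            constructor <;> linarith [this.1, this.2]
          linarith [hγτ j]
        have := hgapgen (φ (τ (j-1))) (hφmem _ (hτmem _)) (φ (τ j)) (hφmem _ (hτmem _))
          (2*ρ' + 1) hdd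
        rw [hG]
        linarith [this]
      · have hjeq : j = Nl + 1 := by omega
        subst hjeq
        have e1 : ψ (Nl+1) = φ (τ Nl) := by simp [hψ]
        have e2 : ψ (Nl+1+1) = b := by
          have : ¬ (Nl + 1 + 1 ≤ Nl + 1) := by omega
          simp [hψ, this]
        rw [e1, e2]
        have hd : dist (γ b) (γ (φ (τ Nl))) ≤ ρ' := by
          have h2 := hγτ Nl
          have hg : Γ₀ (τ Nl) = γ b := by rw [hτN, hle]
          rwa [hg] at h2
        have := hgapgen b (right_mem_Icc.mpr hab) (φ (τ Nl)) (hφmem _ (hτmem Nl)) ρ' hd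
        rw [hG]
        have h2 : |φ (τ Nl) - b| ≤ lam * (ρ' + eps) := this
        have h3 : |b - φ (τ Nl)| = |φ (τ Nl) - b| := abs_sub_comm _ _
        rw [h3]
        nlinarith [hρ'pos, hlam0]
  -- infDist of chain points to T
  have hψT : ∀ j, infDist (γ (ψ j)) T ≤ ρ' := by
    intro j
    by_cases hj0 : j = 0
    · have e : ψ j = a := by simp [hψ, hj0]
      rw [e]
      have hmem : γ a ∈ T := ⟨0, h0l, h0⟩
      rw [infDist_zero_of_mem hmem]
      linarith
    · by_cases hjle : j ≤ Nl + 1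
      · have e : ψ j = φ (τ (j-1)) := by simp [hψ, hj0, hjle]
        rw [e]
        have hmem : Γ₀ (τ (j-1)) ∈ T := mem_image_of_mem _ (hτmem _)
        calc infDist (γ (φ (τ (j-1)))) T ≤ dist (γ (φ (τ (j-1)))) (Γ₀ (τ (j-1))) :=
              infDist_le_dist_of_mem hmem
          _ ≤ ρ' := by rw [dist_comm]; exact hγτ _
      · have e : ψ j = b := by simp [hψ, hj0, hjle]
        rw [e]
        have hmem : γ b ∈ T := ⟨l, hll, hle⟩
        rw [infDist_zero_of_mem hmem]
        linarith
  -- Hausdorff distance bound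
  have hHD : hausdorffDist S T ≤ r := by
    apply hausdorffDist_le_of_infDist (le_of_lt hrpos)
    · intro p hp
      obtain ⟨s, hs, rfl⟩ := hp
      obtain ⟨j, hjP, hjs⟩ := walk P ψ a b s G hψ0 hψP hgap hs.1 hs.2 (le_of_lt hGpos)
      have hds : dist (γ s) (γ (ψ j)) ≤ lam * G + eps := by
        have := (hqg s hs (ψ j) (hψmem j)).2
        have habs : |s - ψ j| ≤ G := hjs
        calc dist (γ s) (γ (ψ j)) ≤ lam * |s - ψ j| + eps := this
          _ ≤ lam * G + eps := by nlinarith [hlam0]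
      calc infDist (γ s) T ≤ infDist (γ (ψ j)) T + dist (γ s) (γ (ψ j)) :=
            infDist_le_infDist_add_dist
        _ ≤ ρ' + (lam * G + eps) := add_le_add (hψT j) hds
        _ ≤ r := by rw [hr]; have := rho0_pos lam eps hlam heps; linarith
    · intro q hq
      obtain ⟨t, ht, rfl⟩ := hq
      calc infDist (Γ₀ t) S ≤ rho0 lam eps := hd1 t ht
        _ ≤ r := by
            rw [hr]
            have h1 : 0 ≤ lam * G := le_of_lt (mul_pos hlam0 hGpos)
            linarith only [h1, heps, hρ'pos]
  linarith
end

section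
/- If Γ₁, Γ₂ : ℝ → ℍ are geodesic lines and there exists R < ∞ such that the Hausdorff distance between the images Γ₁(ℝ) and Γ₂(ℝ) is at most R, then Γ₁(ℝ) = Γ₂(ℝ). -/
open UpperHalfPlane Set

/-- A geodesic line in a metric space: `d(Γ s, Γ t) = |s - t|` for all `s, t`. -/
def IsGeodesicLine {X : Type*} [MetricSpace X] (Γ : ℝ → X) : Prop :=
  ∀ s t : ℝ, dist (Γ s) (Γ t) = |s - t|

noncomputable section

namespace GeodAux

def V0 : Set ℍ := {z : ℍ | z.re = 0}

def Tr (b : ℝ) : ℍ ≃ᵢ ℍ :=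
  ⟨⟨fun z => b +ᵥ z, fun z => (-b) +ᵥ z,
    fun z => by simp [vadd_vadd], fun z => by simp [vadd_vadd]⟩,
    isometry_real_vadd b⟩

@[simp] lemma Tr_apply (b : ℝ) (z : ℍ) : Tr b z = b +ᵥ z := rfl
@[simp] lemma Tr_symm_apply (b : ℝ) (z : ℍ) : (Tr b).symm z = (-b) +ᵥ z := rfl

def SR : Matrix.SpecialLinearGroup (Fin 2) ℝ :=
  ⟨!![0, -1; 1, 0], by norm_num [Matrix.det_fin_two_of]⟩

def Sm : ℍ ≃ᵢ ℍ := IsometryEquiv.constSMul SR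

lemma Sm_coe (z : ℍ) : (Sm z : ℂ) = -(z : ℂ)⁻¹ := by
  show ((SR • z : ℍ) : ℂ) = _
  rw [specialLinearGroup_apply, coe_mk]
  simp [SR]
  ring

lemma Sm_Sm (z : ℍ) : Sm (Sm z) = z := by
  ext
  rw [Sm_coe, Sm_coe, inv_neg, neg_neg, inv_inv]

lemma Sm_symm_apply (z : ℍ) : Sm.symm z = Sm z :=
  Sm.injective (by rw [Sm.apply_symm_apply, Sm_Sm])

lemma Sm_symm_eq : Sm.symm = Sm := IsometryEquiv.ext Sm_symm_apply

lemma Tr_symm_eq (b : ℝ) : (Tr b).symm = Tr (-b) := IsometryEquiv.ext fun z => rfl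

lemma Sm_re (z : ℍ) : (Sm z).re = -z.re / (z.re ^ 2 + z.im ^ 2) := by
  rw [← UpperHalfPlane.coe_re, Sm_coe, Complex.neg_re, Complex.inv_re, Complex.normSq_apply,
    UpperHalfPlane.coe_re, UpperHalfPlane.coe_im]
  ring

lemma Sm_im (z : ℍ) : (Sm z).im = z.im / (z.re ^ 2 + z.im ^ 2) := by
  rw [← UpperHalfPlane.coe_im, Sm_coe, Complex.neg_im, Complex.inv_im, Complex.normSq_apply,
    UpperHalfPlane.coe_re, UpperHalfPlane.coe_im]
  ring

lemma normSq_pos' (z : ℍ) : 0 < z.re ^ 2 + z.im ^ 2 := by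
  have := z.im_pos; positivity

/-- Generalized circles orthogonal to the real axis. -/
def IsVC (S : Set ℍ) : Prop :=
  ∃ α β γ : ℝ, ((α = 0 ∧ β ≠ 0) ∨ (α ≠ 0 ∧ 0 < β ^ 2 - 4 * α * γ)) ∧
    S = {z : ℍ | α * (z.re ^ 2 + z.im ^ 2) + β * z.re + γ = 0}

lemma IsVC_V0 : IsVC V0 := by
  refine ⟨0, 1, 0, Or.inl ⟨rfl, one_ne_zero⟩, ?_⟩
  ext z
  simp [V0]

lemma image_eq (e : ℍ ≃ᵢ ℍ) (S : Set ℍ) : e '' S = {z | e.symm z ∈ S} := by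
  ext z
  constructor
  · rintro ⟨w, hw, rfl⟩
    simpa [e.symm_apply_apply] using hw
  · intro hz
    exact ⟨e.symm z, hz, e.apply_symm_apply z⟩

lemma IsVC_Tr (b : ℝ) {S : Set ℍ} (hS : IsVC S) : IsVC (Tr b '' S) := by
  obtain ⟨α, β, γ, hside, rfl⟩ := hS
  rw [image_eq]
  refine ⟨α, β - 2 * α * b, α * b ^ 2 - β * b + γ, ?_, ?_⟩
  · rcases hside with ⟨h1, h2⟩ | ⟨h1, h2⟩
    · exact Or.inl ⟨h1, by rw [h1]; simpa⟩
    · refine Or.inr ⟨h1, ?_⟩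
      have h3 : (β - 2 * α * b) ^ 2 - 4 * α * (α * b ^ 2 - β * b + γ) = β ^ 2 - 4 * α * γ := by
        ring
      rw [h3]; exact h2
  · ext z
    simp only [mem_setOf_eq, Tr_symm_apply, vadd_re, vadd_im]
    constructor <;> intro h <;> linear_combination h

lemma IsVC_Sm {S : Set ℍ} (hS : IsVC S) : IsVC (Sm '' S) := by
  obtain ⟨α, β, γ, hside, rfl⟩ := hS
  rw [image_eq]
  refine ⟨γ, -β, α, ?_, ?_⟩
  · rcases hside with ⟨h1, h2⟩ | ⟨h1, h2⟩
    · rcases eq_or_ne γ 0 with rfl | hγ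
      · exact Or.inl ⟨rfl, by simpa⟩
      · refine Or.inr ⟨hγ, ?_⟩
        have h3 : (-β) ^ 2 - 4 * γ * α = β ^ 2 := by rw [h1]; ring
        rw [h3]
        exact lt_of_le_of_ne (sq_nonneg β) (Ne.symm (pow_ne_zero 2 h2))
    · rcases eq_or_ne γ 0 with rfl | hγ
      · refine Or.inl ⟨rfl, ?_⟩
        have h3 : β ≠ 0 := by
          intro hh
          rw [hh] at h2
          nlinarith [h2]
        simpa
      · refine Or.inr ⟨hγ, by nlinarith [h2]⟩
  · ext z
    have hp := normSq_pos' z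
    simp only [mem_setOf_eq, Sm_symm_apply]
    have heq : α * ((Sm z).re ^ 2 + (Sm z).im ^ 2) + β * (Sm z).re + γ
        = (γ * (z.re ^ 2 + z.im ^ 2) + (-β) * z.re + α) / (z.re ^ 2 + z.im ^ 2) := by
      rw [Sm_re, Sm_im]
      field_simp
      ring
    rw [heq, div_eq_zero_iff]
    constructor
    · rintro (h | h)
      · exact h
      · exact absurd h (ne_of_gt hp)
    · exact fun h => Or.inl h


lemma dist_coe_sq (z w : ℍ) :
    dist (z : ℂ) (w : ℂ) ^ 2 = (z.re - w.re) ^ 2 + (z.im - w.im) ^ 2 := by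
  rw [Complex.dist_eq, Complex.sq_norm, Complex.normSq_apply, Complex.sub_re, Complex.sub_im,
    UpperHalfPlane.coe_re, UpperHalfPlane.coe_re, UpperHalfPlane.coe_im, UpperHalfPlane.coe_im]
  ring

lemma collinear_re_eq_zero {a m z : ℍ} (ha : a.re = 0) (hm : m.re = 0)
    (hne : a.im ≠ m.im) (h : dist a m + dist m z = dist a z) : z.re = 0 := by
  have hu : 0 < a.im := a.im_pos
  have hv : 0 < m.im := m.im_pos
  have hy : 0 < z.im := z.im_pos
  have hc := congrArg Real.cosh h
  rw [Real.cosh_add] at hc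
  have key : (Real.cosh (dist a z) - Real.cosh (dist a m) * Real.cosh (dist m z)) ^ 2
      = (Real.cosh (dist a m) ^ 2 - 1) * (Real.cosh (dist m z) ^ 2 - 1) := by
    have h2 : Real.cosh (dist a z) - Real.cosh (dist a m) * Real.cosh (dist m z)
        = Real.sinh (dist a m) * Real.sinh (dist m z) := by rw [← hc]; ring
    rw [h2, mul_pow, Real.sinh_sq, Real.sinh_sq]
  rw [cosh_dist, cosh_dist, cosh_dist, dist_coe_sq, dist_coe_sq, dist_coe_sq, ha, hm] at key
  set u := a.im
  set v := m.im
  set x := z.re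
  set y := z.im
  have hvu : v ^ 2 - u ^ 2 ≠ 0 := by
    intro hh
    have h3 : (v - u) * (v + u) = 0 := by linear_combination hh
    rcases mul_eq_zero.mp h3 with h4 | h4
    · exact hne (by linarith)
    · linarith
  have hx2 : (v ^ 2 - u ^ 2) ^ 2 * x ^ 2 * (256 * u ^ 4 * v ^ 6 * y ^ 4) = 0 := by
    field_simp at key
    linear_combination (-64 * u ^ 4 * v ^ 4 * y ^ 4) * key
  have hC : 0 < (v ^ 2 - u ^ 2) ^ 2 * (256 * u ^ 4 * v ^ 6 * y ^ 4) := by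
    have h1 : 0 < (v ^ 2 - u ^ 2) ^ 2 :=
      lt_of_le_of_ne (sq_nonneg _) (Ne.symm (pow_ne_zero 2 hvu))
    have h2 : 0 < 256 * u ^ 4 * v ^ 6 * y ^ 4 := by positivity
    exact mul_pos h1 h2
  have hxx : x ^ 2 = 0 := by
    by_contra hxx
    have : 0 < x ^ 2 := lt_of_le_of_ne (sq_nonneg x) (Ne.symm hxx)
    nlinarith [hx2, hC]
  exact pow_eq_zero_iff two_ne_zero |>.mp hxx


lemma range_eq_V0 {Γ : ℝ → ℍ} (hΓ : IsGeodesicLine Γ)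
    (h0 : (Γ 0).re = 0) (h1 : (Γ 1).re = 0) : range Γ = V0 := by
  have hdist : ∀ s t : ℝ, dist (Γ s) (Γ t) = |s - t| := hΓ
  have hne01 : (Γ 0).im ≠ (Γ 1).im := by
    intro h
    have h2 : Γ 0 = Γ 1 := UpperHalfPlane.ext' (h0.trans h1.symm) h
    have h3 := hdist 0 1
    rw [h2, dist_self] at h3
    norm_num at h3
  have hge : ∀ t : ℝ, 1 ≤ t → (Γ t).re = 0 := by
    intro t ht
    apply collinear_re_eq_zero h0 h1 hne01
    rw [hdist 0 1, hdist 1 t, hdist 0 t]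
    rw [abs_of_nonpos (by linarith), abs_of_nonpos (by linarith),
      abs_of_nonpos (by linarith : (0:ℝ) - t ≤ 0)]
    ring
  have hle : ∀ t : ℝ, t ≤ 0 → (Γ t).re = 0 := by
    intro t ht
    apply collinear_re_eq_zero h1 h0 hne01.symm
    rw [hdist 1 0, hdist 0 t, hdist 1 t]
    rw [abs_of_nonneg (by linarith), abs_of_nonneg (by linarith),
      abs_of_nonneg (by linarith : (0:ℝ) ≤ 1 - t)]
    ring
  have h2 : (Γ 2).re = 0 := hge 2 one_le_two
  have hne21 : (Γ 2).im ≠ (Γ 1).im := by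
    intro h
    have he : Γ 2 = Γ 1 := UpperHalfPlane.ext' (h2.trans h1.symm) h
    have h3 := hdist 2 1
    rw [he, dist_self] at h3
    norm_num at h3
  have hall : ∀ t : ℝ, (Γ t).re = 0 := by
    intro t
    rcases le_or_gt t 0 with h | h
    · exact hle t h
    rcases le_or_gt 1 t with h' | h'
    · exact hge t h'
    apply collinear_re_eq_zero h2 h1 hne21
    rw [hdist 2 1, hdist 1 t, hdist 2 t]
    rw [abs_of_nonneg (by linarith), abs_of_nonneg (by linarith),
      abs_of_nonneg (by linarith : (0:ℝ) ≤ 2 - t)]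
    ring
  apply Subset.antisymm
  · rintro _ ⟨t, rfl⟩
    exact hall t
  · intro z hz
    have hzre : z.re = 0 := hz
    set f : ℝ → ℝ := fun t => Real.log (Γ t).im with hf
    have hfd : ∀ s t : ℝ, |f s - f t| = |s - t| := by
      intro s t
      have h4 := UpperHalfPlane.dist_of_re_eq ((hall s).trans (hall t).symm)
      rw [hdist s t, Real.dist_eq] at h4
      exact h4.symm
    set L := Real.log z.im with hL
    have himeq : ∀ s : ℝ, f s = L → Γ s = z := by
      intro s hs
      have h5 : (Γ s).im = z.im := by
        have h6 := congrArg Real.exp hs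
        rwa [hf, Real.exp_log (Γ s).im_pos, hL, Real.exp_log z.im_pos] at h6
      exact UpperHalfPlane.ext' ((hall s).trans hzre.symm) h5
    rcases eq_or_ne L (f 0) with hL0 | hL0
    · exact ⟨0, himeq 0 hL0.symm⟩
    set t := |L - f 0| with htdef
    have ht : 0 < t := abs_pos.2 (sub_ne_zero.2 hL0)
    have e1 : f t = f 0 + t ∨ f t = f 0 - t := by
      have := hfd t 0
      rw [sub_zero, abs_of_pos ht] at this
      rcases abs_eq ht.le |>.mp this with h | h
      · exact Or.inl (by linarith)
      · exact Or.inr (by linarith)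
    have e2 : f (-t) = f 0 + t ∨ f (-t) = f 0 - t := by
      have := hfd (-t) 0
      rw [sub_zero, abs_neg, abs_of_pos ht] at this
      rcases abs_eq ht.le |>.mp this with h | h
      · exact Or.inl (by linarith)
      · exact Or.inr (by linarith)
    have e3 : f t ≠ f (-t) := by
      intro h
      have := hfd t (-t)
      rw [h, sub_self, abs_zero] at this
      have h7 : |t - -t| = 2 * t := by rw [abs_of_pos (by linarith)]; ring
      rw [h7] at this
      linarith
    have eL : L = f 0 + t ∨ L = f 0 - t := by
      rcases abs_eq ht.le |>.mp htdef.symm with h | h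
      · exact Or.inl (by linarith)
      · exact Or.inr (by linarith)
    have : f t = L ∨ f (-t) = L := by
      rcases e1 with ha | ha <;> rcases e2 with hb | hb <;> rcases eL with hc | hc <;>
        first
          | (left; linarith)
          | (right; linarith)
          | (exfalso; exact e3 (by linarith))
    rcases this with h | h
    · exact ⟨t, himeq t h⟩
    · exact ⟨-t, himeq (-t) h⟩


lemma cosh_dist_ge (z w : ℍ) (hw : w.re = 0) : |z.re| / z.im ≤ Real.cosh (dist z w) := by
  rw [UpperHalfPlane.cosh_dist, dist_coe_sq, hw]
  have hy := z.im_pos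
  have hs := w.im_pos
  rw [div_le_iff₀ hy]
  have h5 : |z.re| * (2 * w.im) ≤ z.im * (2 * w.im) + ((z.re - 0) ^ 2 + (z.im - w.im) ^ 2) := by
    nlinarith [sq_nonneg (|z.re| - w.im), sq_nonneg (z.im - w.im), sq_abs z.re]
  have h6 : (1 + ((z.re - 0) ^ 2 + (z.im - w.im) ^ 2) / (2 * z.im * w.im)) * z.im
      = (z.im * (2 * w.im) + ((z.re - 0) ^ 2 + (z.im - w.im) ^ 2)) / (2 * w.im) := by
    field_simp
  rw [h6, le_div_iff₀ (by positivity : (0:ℝ) < 2 * w.im)]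
  linarith

lemma main_bound {S : Set ℍ} {R' : ℝ} (hR' : 0 ≤ R')
    (hfin : EMetric.hausdorffEdist S V0 ≤ ENNReal.ofReal R') :
    ∀ z : ℍ, z ∈ S → |z.re| / z.im < Real.cosh (R' + 1) := by
  intro z hz
  have hinf : EMetric.infEdist z V0 ≤ ENNReal.ofReal R' :=
    le_trans (EMetric.infEdist_le_hausdorffEdist_of_mem hz) hfin
  have hlt : EMetric.infEdist z V0 < ENNReal.ofReal (R' + 1) :=
    lt_of_le_of_lt hinf (by
      rw [ENNReal.ofReal_lt_ofReal_iff (by positivity)]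
      linarith)
  obtain ⟨w, hwV, hw⟩ := EMetric.infEdist_lt_iff.mp hlt
  rw [edist_dist, ENNReal.ofReal_lt_ofReal_iff (by positivity)] at hw
  have h1 : Real.cosh (dist z w) < Real.cosh (R' + 1) := by
    rw [Real.cosh_lt_cosh, abs_of_nonneg dist_nonneg, abs_of_pos (by positivity : (0:ℝ) < R' + 1)]
    exact hw
  exact lt_of_le_of_lt (cosh_dist_ge z w hwV) h1

lemma shape_eq_V0 {S : Set ℍ} (hS : IsVC S) {R : ℝ}
    (hfin : EMetric.hausdorffEdist S V0 ≤ ENNReal.ofReal R) : S = V0 := by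
  set R' := max R 0 with hR'def
  have hR0 : 0 ≤ R' := le_max_right _ _
  have hfin' : EMetric.hausdorffEdist S V0 ≤ ENNReal.ofReal R' :=
    le_trans hfin (ENNReal.ofReal_le_ofReal (le_max_left _ _))
  set K := Real.cosh (R' + 1) with hKdef
  have hK1 : 1 ≤ K := Real.one_le_cosh _
  have main := main_bound hR0 hfin'
  clear_value K R'
  obtain ⟨α, β, γ, hside, rfl⟩ := hS
  rcases hside with ⟨hα, hβ⟩ | ⟨hα, hdisc⟩
  · -- vertical line x = -γ/β
    subst hα
    rcases eq_or_ne γ 0 with rfl | hγ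
    · ext z
      simp only [mem_setOf_eq, V0]
      constructor
      · intro h
        have : β * z.re = 0 := by linarith
        rcases mul_eq_zero.mp this with h' | h'
        · exact absurd h' hβ
        · exact h'
      · intro h
        rw [h]
        ring
    · exfalso
      set x₀ := -γ / β with hx₀def
      have hx₀ : x₀ ≠ 0 := by
        rw [hx₀def]
        exact div_ne_zero (neg_ne_zero.mpr hγ) hβ
      set y := |x₀| / K with hydef
      have hy : 0 < y := by
        have := abs_pos.mpr hx₀
        positivity
      have hmem : (mk ⟨x₀, y⟩ hy : ℍ) ∈ {z : ℍ | 0 * (z.re ^ 2 + z.im ^ 2) + β * z.re + γ = 0} := by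
        show 0 * _ + β * (mk ⟨x₀, y⟩ hy : ℍ).re + γ = 0
        have hre : (mk ⟨x₀, y⟩ hy : ℍ).re = x₀ := rfl
        rw [hre, hx₀def]
        field_simp
        ring
      have hb := main _ hmem
      have hre : (mk ⟨x₀, y⟩ hy : ℍ).re = x₀ := rfl
      have him : (mk ⟨x₀, y⟩ hy : ℍ).im = y := rfl
      rw [hre, him, hydef] at hb
      have habs : 0 < |x₀| := abs_pos.mpr hx₀
      have hK0 : K ≠ 0 := by positivity
      have heq2 : |x₀| / (|x₀| / K) = K := by
        field_simp
      rw [heq2, ← hKdef] at hb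
      exact lt_irrefl _ hb
  · -- circle
    exfalso
    set c := -β / (2 * α) with hcdef
    set ρ := Real.sqrt (β ^ 2 - 4 * α * γ) / (2 * |α|) with hρdef
    have habs : 0 < |α| := abs_pos.mpr hα
    have hρ : 0 < ρ := by
      have := Real.sqrt_pos.mpr hdisc
      positivity
    have hc' : β + 2 * α * c = 0 := by
      rw [hcdef]
      field_simp
      ring
    have hρ' : 4 * α ^ 2 * ρ ^ 2 = β ^ 2 - 4 * α * γ := by
      rw [hρdef, div_pow, mul_pow, sq_abs, Real.sq_sqrt hdisc.le]
      field_simp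
      ring
    -- choose the endpoint away from 0
    obtain ⟨sg, hsg1, ha⟩ : ∃ s : ℝ, |s| = 1 ∧ c + s * ρ ≠ 0 := by
      rcases eq_or_ne (c + ρ) 0 with h | h
      · refine ⟨-1, by norm_num, ?_⟩
        intro h'
        have : ρ = 0 := by linarith [h, h']
        exact absurd this (ne_of_gt hρ)
      · exact ⟨1, by norm_num, by simpa using h⟩
    have hsg2 : sg ^ 2 = 1 := by
      rw [← sq_abs, hsg1]
      norm_num
    set A := |c + sg * ρ| with hAdef
    have hA : 0 < A := abs_pos.mpr ha
    set t := min ρ (min (A / 2) (A ^ 2 / (8 * ρ * (K + 1) ^ 2))) with htdef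
    have ht0 : 0 < t := lt_min hρ (lt_min (by positivity) (by positivity))
    have htρ : t ≤ ρ := min_le_left _ _
    have htA : t ≤ A / 2 := le_trans (min_le_right _ _) (min_le_left _ _)
    have htK : t ≤ A ^ 2 / (8 * ρ * (K + 1) ^ 2) := le_trans (min_le_right _ _) (min_le_right _ _)
    set y := Real.sqrt (t * (2 * ρ - t)) with hydef
    have hy2 : y ^ 2 = t * (2 * ρ - t) := Real.sq_sqrt (by nlinarith)
    have hy : 0 < y := Real.sqrt_pos.mpr (by nlinarith)
    set x := c + sg * (ρ - t) with hxdef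
    clear_value c ρ A t y x
    have hmem : (mk ⟨x, y⟩ hy : ℍ) ∈
        {z : ℍ | α * (z.re ^ 2 + z.im ^ 2) + β * z.re + γ = 0} := by
      show α * (x ^ 2 + y ^ 2) + β * x + γ = 0
      have hcirc : (x - c) ^ 2 + y ^ 2 = ρ ^ 2 := by
        rw [hxdef, hy2]
        linear_combination (ρ - t) ^ 2 * hsg2
      have h9 : α * (α * (x ^ 2 + y ^ 2) + β * x + γ) = 0 := by
        linear_combination α ^ 2 * hcirc + (x * α + (β - 2 * α * c) / 4) * hc' + (1 / 4) * hρ'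
      rcases mul_eq_zero.mp h9 with h' | h'
      · exact absurd h' hα
      · exact h'
    have hb := main _ hmem
    have hre : (mk ⟨x, y⟩ hy : ℍ).re = x := rfl
    have him : (mk ⟨x, y⟩ hy : ℍ).im = y := rfl
    rw [hre, him, ← hKdef] at hb
    clear htdef hρdef hydef hcdef main hfin hfin' hdisc hmem hρ' hc' hR'def hR0
    have hyA : y ≤ A / (2 * (K + 1)) := by
      have h10 : y ^ 2 ≤ (A / (2 * (K + 1))) ^ 2 := by
        rw [hy2]
        have h11 : t * (2 * ρ - t) ≤ 2 * ρ * t := by nlinarith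
        have h12 : 2 * ρ * t ≤ A ^ 2 / (4 * (K + 1) ^ 2) := by
          rw [le_div_iff₀ (by positivity : (0:ℝ) < 8 * ρ * (K + 1) ^ 2)] at htK
          rw [le_div_iff₀ (by positivity : (0:ℝ) < 4 * (K + 1) ^ 2)]
          nlinarith [htK]
        have h13 : A ^ 2 / (4 * (K + 1) ^ 2) = (A / (2 * (K + 1))) ^ 2 := by
          rw [div_pow]
          congr 1
          ring
        linarith [h11, h12, h13.le, h13.ge]
      have hB : 0 < A / (2 * (K + 1)) := by positivity
      nlinarith [h10, hB, hy]
    have hxA : A / 2 ≤ |x| := by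
      have h13 : x = (c + sg * ρ) - sg * t := by rw [hxdef]; ring
      have h14 : A - |sg * t| ≤ |x| := by
        rw [h13]
        have := abs_sub_abs_le_abs_sub (c + sg * ρ) (sg * t)
        linarith [this]
      have h15 : |sg * t| = t := by
        rw [abs_mul, hsg1, one_mul, abs_of_pos ht0]
      linarith [h14, h15, htA]
    have hfinal : K + 1 ≤ |x| / y := by
      have h16 : A / 2 / (A / (2 * (K + 1))) = K + 1 := by
        field_simp
      calc K + 1 = A / 2 / (A / (2 * (K + 1))) := h16.symm
        _ ≤ |x| / y := by
            apply div_le_div₀ (abs_nonneg x) hxA hy hyA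
    have h20 : |x| / y < K + 1 := lt_of_lt_of_le hb (by linarith)
    linarith


def preservesVC (e : ℍ ≃ᵢ ℍ) : Prop := ∀ S : Set ℍ, IsVC S → IsVC (e '' S)

lemma preservesVC_Tr (b : ℝ) : preservesVC (Tr b) := fun _ h => IsVC_Tr b h
lemma preservesVC_Sm : preservesVC Sm := fun _ h => IsVC_Sm h

lemma trans_image (e f : ℍ ≃ᵢ ℍ) (S : Set ℍ) : (e.trans f) '' S = f '' (e '' S) := by
  have h : ⇑(e.trans f) = ⇑f ∘ ⇑e := rfl
  rw [h, Set.image_comp]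

lemma preservesVC_trans {e f : ℍ ≃ᵢ ℍ} (he : preservesVC e) (hf : preservesVC f) :
    preservesVC (e.trans f) := by
  intro S hS
  rw [trans_image]
  exact hf _ (he _ hS)

lemma exists_word (z₁ z₂ : ℍ) :
    ∃ e : ℍ ≃ᵢ ℍ, (e z₁).re = 0 ∧ (e z₂).re = 0 ∧ preservesVC e ∧ preservesVC e.symm := by
  rcases eq_or_ne z₁.re z₂.re with hre | hre
  · refine ⟨Tr (-z₁.re), ?_, ?_, preservesVC_Tr _, ?_⟩
    · show ((-z₁.re) +ᵥ z₁).re = 0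
      rw [vadd_re]
      ring
    · show ((-z₁.re) +ᵥ z₂).re = 0
      rw [vadd_re, ← hre]
      ring
    · rw [Tr_symm_eq]
      exact preservesVC_Tr _
  · have hx12 : z₁.re - z₂.re ≠ 0 := sub_ne_zero.mpr hre
    set c := (z₁.re ^ 2 + z₁.im ^ 2 - z₂.re ^ 2 - z₂.im ^ 2) / (2 * (z₁.re - z₂.re)) with hcdef
    set r := Real.sqrt ((z₁.re - c) ^ 2 + z₁.im ^ 2) with hrdef
    clear_value c r
    have hr2 : r ^ 2 = (z₁.re - c) ^ 2 + z₁.im ^ 2 := by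
      rw [hrdef]
      exact Real.sq_sqrt (by positivity)
    have hr : 0 < r := by
      rw [hrdef]
      exact Real.sqrt_pos.mpr (by nlinarith [z₁.im_pos, sq_nonneg (z₁.re - c)])
    have hc2 : (z₂.re - c) ^ 2 + z₂.im ^ 2 = r ^ 2 := by
      have hcc : c * (2 * (z₁.re - z₂.re)) = z₁.re ^ 2 + z₁.im ^ 2 - z₂.re ^ 2 - z₂.im ^ 2 := by
        rw [hcdef]
        exact div_mul_cancel₀ _ (by intro h; exact hx12 (by linarith))
      rw [hr2]
      linear_combination hcc
    set b := c + r with hbdef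
    clear_value b
    have hj1 : (-b + z₁.re) ^ 2 + z₁.im ^ 2 = 2 * r * (b - z₁.re) := by
      rw [hbdef]
      linear_combination -hr2
    have hj2 : (-b + z₂.re) ^ 2 + z₂.im ^ 2 = 2 * r * (b - z₂.re) := by
      rw [hbdef]
      linear_combination hc2
    have hb1 : 0 < b - z₁.re := by nlinarith [z₁.im_pos, sq_nonneg (-b + z₁.re), hj1, hr]
    have hb2 : 0 < b - z₂.re := by nlinarith [z₂.im_pos, sq_nonneg (-b + z₂.re), hj2, hr]
    refine ⟨((Tr (-b)).trans Sm).trans (Tr (-(1 / (2 * r)))), ?_, ?_, ?_, ?_⟩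
    · show ((-(1 / (2 * r))) +ᵥ (Sm ((-b) +ᵥ z₁))).re = 0
      rw [vadd_re, Sm_re, vadd_re, vadd_im, hj1]
      field_simp
      ring
    · show ((-(1 / (2 * r))) +ᵥ (Sm ((-b) +ᵥ z₂))).re = 0
      rw [vadd_re, Sm_re, vadd_re, vadd_im, hj2]
      field_simp
      ring
    · exact preservesVC_trans (preservesVC_trans (preservesVC_Tr _) preservesVC_Sm)
        (preservesVC_Tr _)
    · have hsymm : (((Tr (-b)).trans Sm).trans (Tr (-(1 / (2 * r))))).symm
          = ((Tr (-(1 / (2 * r)))).symm.trans Sm.symm).trans (Tr (-b)).symm :=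
        IsometryEquiv.ext fun z => rfl
      rw [hsymm, Tr_symm_eq, Tr_symm_eq, Sm_symm_eq]
      exact preservesVC_trans (preservesVC_trans (preservesVC_Tr _) preservesVC_Sm)
        (preservesVC_Tr _)


end GeodAux

end

/-- **Geodesic lines in the hyperbolic plane at finite Hausdorff distance coincide.**
If `Γ₁, Γ₂ : ℝ → ℍ` are geodesic lines and there is `R < ∞` with the Hausdorff
distance between their images at most `R`, then the images are equal. -/
theorem geodesic_lines_finite_hausdorff_dist_eq (Γ₁ Γ₂ : ℝ → ℍ)
    (h₁ : IsGeodesicLine Γ₁) (h₂ : IsGeodesicLine Γ₂)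
    (hR : ∃ R : ℝ, EMetric.hausdorffEdist (range Γ₁) (range Γ₂) ≤ ENNReal.ofReal R) :
    range Γ₁ = range Γ₂ := by


  obtain ⟨R, hR⟩ := hR
  obtain ⟨e₁, he₁0, he₁1, he₁p, he₁ps⟩ := GeodAux.exists_word (Γ₁ 0) (Γ₁ 1)
  obtain ⟨e₂, he₂0, he₂1, he₂p, he₂ps⟩ := GeodAux.exists_word (Γ₂ 0) (Γ₂ 1)
  have hg₁ : IsGeodesicLine (⇑e₁ ∘ Γ₁) := fun s t => by
    simp only [Function.comp_apply, e₁.dist_eq]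
    exact h₁ s t
  have hg₂ : IsGeodesicLine (⇑e₂ ∘ Γ₂) := fun s t => by
    simp only [Function.comp_apply, e₂.dist_eq]
    exact h₂ s t
  have hr₁ : e₁ '' range Γ₁ = GeodAux.V0 := by
    rw [← Set.range_comp]
    exact GeodAux.range_eq_V0 hg₁ he₁0 he₁1
  have hr₂ : e₂ '' range Γ₂ = GeodAux.V0 := by
    rw [← Set.range_comp]
    exact GeodAux.range_eq_V0 hg₂ he₂0 he₂1
  have hΓ₁ : range Γ₁ = e₁.symm '' GeodAux.V0 := by
    rw [← hr₁]
    exact (Equiv.symm_image_image e₁.toEquiv (range Γ₁)).symm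
  have hA : GeodAux.IsVC (e₂ '' range Γ₁) := by
    rw [hΓ₁]
    exact he₂p _ (he₁ps _ GeodAux.IsVC_V0)
  have hdist : EMetric.hausdorffEdist (e₂ '' range Γ₁) GeodAux.V0 ≤ ENNReal.ofReal R := by
    rw [← hr₂]; show Metric.hausdorffEDist _ _ ≤ _; rw [Metric.hausdorffEDist_image e₂.isometry]
    exact hR
  have hfin := GeodAux.shape_eq_V0 hA hdist
  have himg : e₂ '' range Γ₁ = e₂ '' range Γ₂ := by rw [hfin, hr₂]
  exact Set.image_injective.mpr e₂.injective himg
end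

section
/- Let L(x,v,t) = ½·h_x(v,v) − V(x,t) be a mechanical Lagrangian as in the context, and let γ : [a,b] → ℝⁿ be a C¹ curve with average displacement ρ(γ;a,b) = K > 0. Then A(γ;a,b) ≥ (B₁·K²/8)·(b−a); and if in addition γ is a minimizing segment, then A(γ;a,b) ≤ (½·B₂·K² − V_min)·(b−a). -/
open Set MeasureTheory intervalIntegral

noncomputable section

/-- The action `A(γ; a, b) = ∫_a^b L(γ(t), g(t), t) dt`. -/
def lagrangianAction {n : ℕ} (L : EuclideanSpace ℝ (Fin n) → EuclideanSpace ℝ (Fin n) → ℝ → ℝ)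
    (γ g : ℝ → EuclideanSpace ℝ (Fin n)) (a b : ℝ) : ℝ :=
  ∫ t in a..b, L (γ t) (g t) t

/-- `β` is absolutely continuous on `[a, b]` with (a.e.) derivative `g`. -/
def IsACWith {n : ℕ} (β g : ℝ → EuclideanSpace ℝ (Fin n)) (a b : ℝ) : Prop :=
  IntervalIntegrable g volume a b ∧ ∀ t ∈ Icc a b, β t = β a + ∫ s in a..t, g s

/-- `γ` is a minimizing segment for `L` on `[a, b]`. -/
def IsMinimizingSegment {n : ℕ} (L : EuclideanSpace ℝ (Fin n) → EuclideanSpace ℝ (Fin n) → ℝ → ℝ)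
    (γ : ℝ → EuclideanSpace ℝ (Fin n)) (a b : ℝ) : Prop :=
  ContDiffOn ℝ 1 γ (Icc a b) ∧
    ∀ β g : ℝ → EuclideanSpace ℝ (Fin n), IsACWith β g a b → β a = γ a → β b = γ b →
      lagrangianAction L γ (fun t => derivWithin γ (Icc a b) t) a b ≤ lagrangianAction L β g a b

set_option maxHeartbeats 1000000 in
/-- **Action bounds for mechanical Lagrangians.** Let
`L(x,v,t) = ½ h_x(v,v) − V(x,t)` with `B₁‖v‖² ≤ h_x(v,v) ≤ B₂‖v‖²` and
`V_min ≤ V ≤ 0`. If `γ : [a,b] → ℝⁿ` is `C¹` with average displacement `K > 0`,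
then `A(γ;a,b) ≥ (B₁K²/8)(b−a)`, and if `γ` is moreover a minimizing segment,
then `A(γ;a,b) ≤ (½B₂K² − V_min)(b−a)`. -/
theorem mechanical_action_bounds {n : ℕ}
    (h : EuclideanSpace ℝ (Fin n) →
      EuclideanSpace ℝ (Fin n) →ₗ[ℝ] EuclideanSpace ℝ (Fin n) →ₗ[ℝ] ℝ)
    (B₁ B₂ : ℝ) (hB₁ : 0 < B₁) (hB₁₂ : B₁ ≤ B₂)
    (hhcont : Continuous fun p : EuclideanSpace ℝ (Fin n) × EuclideanSpace ℝ (Fin n) ×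
      EuclideanSpace ℝ (Fin n) => h p.1 p.2.1 p.2.2)
    (hsymm : ∀ x v w, h x v w = h x w v)
    (hbounds : ∀ x v, B₁ * ‖v‖ ^ 2 ≤ h x v v ∧ h x v v ≤ B₂ * ‖v‖ ^ 2)
    (V : EuclideanSpace ℝ (Fin n) → ℝ → ℝ) (Vmin : ℝ) (hVmin : Vmin ≤ 0)
    (hVcont : Continuous fun p : EuclideanSpace ℝ (Fin n) × ℝ => V p.1 p.2)
    (hV : ∀ x t, Vmin ≤ V x t ∧ V x t ≤ 0)
    (γ : ℝ → EuclideanSpace ℝ (Fin n)) (a b K : ℝ) (hab : a < b) (hK : 0 < K)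
    (hγ : ContDiffOn ℝ 1 γ (Icc a b))
    (hρ : ‖γ b - γ a‖ / (b - a) = K) :
    B₁ * K ^ 2 / 8 * (b - a) ≤
        lagrangianAction (fun x v t => (1 / 2) * h x v v - V x t) γ
          (fun t => derivWithin γ (Icc a b) t) a b ∧
      (IsMinimizingSegment (fun x v t => (1 / 2) * h x v v - V x t) γ a b →
        lagrangianAction (fun x v t => (1 / 2) * h x v v - V x t) γ
            (fun t => derivWithin γ (Icc a b) t) a b ≤
          ((1 / 2) * B₂ * K ^ 2 - Vmin) * (b - a)) := by

  classical
  have hba : (0:ℝ) < b - a := sub_pos.mpr hab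
  set γ' : ℝ → EuclideanSpace ℝ (Fin n) := fun t => derivWithin γ (Icc a b) t with hγ'def
  have hud : UniqueDiffOn ℝ (Icc a b) := uniqueDiffOn_Icc hab
  have hγcont : ContinuousOn γ (Icc a b) := hγ.continuousOn
  have hγ'cont : ContinuousOn γ' (Icc a b) :=
    hγ.continuousOn_derivWithin hud le_rfl
  have hγ'int : IntervalIntegrable γ' volume a b := by
    apply ContinuousOn.intervalIntegrable
    rwa [uIcc_of_le hab.le]
  -- FTC
  have hFTC : (∫ t in a..b, γ' t) = γ b - γ a := by
    apply intervalIntegral.integral_eq_sub_of_hasDeriv_right_of_le hab.le hγcont _ hγ'int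
    intro x hx
    have hd : HasDerivWithinAt γ (γ' x) (Icc a b) x :=
      ((hγ.differentiableOn one_ne_zero) x (Ioo_subset_Icc_self hx)).hasDerivWithinAt
    exact (hd.hasDerivAt (Icc_mem_nhds hx.1 hx.2)).hasDerivWithinAt
  clear_value γ'
  have hnormba : ‖γ b - γ a‖ = K * (b - a) := by
    field_simp at hρ
    linarith [hρ]
  set u : EuclideanSpace ℝ (Fin n) := ‖γ b - γ a‖⁻¹ • (γ b - γ a) with hu
  have hnz : ‖γ b - γ a‖ ≠ 0 := by rw [hnormba]; positivity
  have hunorm : ‖u‖ = 1 := by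
    rw [hu, norm_smul, norm_inv, norm_norm, inv_mul_cancel₀ hnz]
  clear_value u
  -- continuity of auxiliary integrands
  have hn2cont : ContinuousOn (fun t => ‖γ' t‖ ^ 2) (Icc a b) :=
    (hγ'cont.norm).pow 2
  have hn2int : IntervalIntegrable (fun t => ‖γ' t‖ ^ 2) volume a b := by
    apply ContinuousOn.intervalIntegrable
    rwa [uIcc_of_le hab.le]
  have hinncont : ContinuousOn (fun t => (2 * K) * inner ℝ u (γ' t) : ℝ → ℝ) (Icc a b) :=
    (continuousOn_const.mul ((continuous_const.inner continuous_id).comp_continuousOn hγ'cont))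
  have hinnint : IntervalIntegrable (fun t => (2 * K) * inner ℝ u (γ' t) : ℝ → ℝ) volume a b := by
    apply ContinuousOn.intervalIntegrable
    rwa [uIcc_of_le hab.le]
  -- core L² lower bound
  have hsq : K ^ 2 * (b - a) ≤ ∫ t in a..b, ‖γ' t‖ ^ 2 := by
    have hpt : ∀ t ∈ Icc a b, (2 * K) * inner ℝ u (γ' t) ≤ ‖γ' t‖ ^ 2 + K ^ 2 := by
      intro t _
      have h1 : (inner ℝ u (γ' t) : ℝ) ≤ ‖γ' t‖ := by
        calc (inner ℝ u (γ' t) : ℝ) ≤ ‖u‖ * ‖γ' t‖ := real_inner_le_norm _ _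
        _ = ‖γ' t‖ := by rw [hunorm, one_mul]
      have h2 : 2 * K * ‖γ' t‖ ≤ K ^ 2 + ‖γ' t‖ ^ 2 := by nlinarith [sq_nonneg (K - ‖γ' t‖)]
      nlinarith [h1, hK.le, norm_nonneg (γ' t)]
    have hmono := intervalIntegral.integral_mono_on hab.le hinnint
      (hn2int.add (intervalIntegrable_const)) hpt
    have hlhs : (∫ t in a..b, (2 * K) * inner ℝ u (γ' t)) = 2 * K ^ 2 * (b - a) := by
      rw [intervalIntegral.integral_const_mul]
      have : (∫ t in a..b, (inner ℝ u (γ' t) : ℝ)) = inner ℝ u (γ b - γ a) := by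
        have := (innerSL ℝ u).intervalIntegral_comp_comm hγ'int (a := a) (b := b)
        simpa [hFTC] using this
      rw [this, hu, real_inner_smul_left, real_inner_self_eq_norm_sq, hnormba]
      field_simp
    have hrhs : (∫ t in a..b, (‖γ' t‖ ^ 2 + K ^ 2)) =
        (∫ t in a..b, ‖γ' t‖ ^ 2) + K ^ 2 * (b - a) := by
      rw [intervalIntegral.integral_add hn2int intervalIntegrable_const,
        intervalIntegral.integral_const, smul_eq_mul, mul_comm]
    rw [hlhs, hrhs] at hmono
    nlinarith [hmono]
  -- integrability of the Lagrangian along γ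
  have hLcont : ContinuousOn
      (fun t => (1 / 2 : ℝ) * h (γ t) (γ' t) (γ' t) - V (γ t) t) (Icc a b) := by
    apply ContinuousOn.sub
    · exact continuousOn_const.mul
        (hhcont.comp_continuousOn (hγcont.prodMk (hγ'cont.prodMk hγ'cont)))
    · exact hVcont.comp_continuousOn (hγcont.prodMk continuousOn_id)
  have hLint : IntervalIntegrable
      (fun t => (1 / 2 : ℝ) * h (γ t) (γ' t) (γ' t) - V (γ t) t) volume a b := by
    apply ContinuousOn.intervalIntegrable
    rwa [uIcc_of_le hab.le]
  constructor
  · -- lower bound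
    have hpt : ∀ t ∈ Icc a b, (1 / 2 : ℝ) * (B₁ * ‖γ' t‖ ^ 2) ≤
        (1 / 2 : ℝ) * h (γ t) (γ' t) (γ' t) - V (γ t) t := by
      intro t _
      have h1 := (hbounds (γ t) (γ' t)).1
      have h2 := (hV (γ t) t).2
      nlinarith
    have hint2 : IntervalIntegrable (fun t => (1 / 2 : ℝ) * (B₁ * ‖γ' t‖ ^ 2)) volume a b :=
      (hn2int.const_mul B₁).const_mul (1 / 2)
    have hmono := intervalIntegral.integral_mono_on hab.le hint2 hLint hpt
    have heq : (∫ t in a..b, (1 / 2 : ℝ) * (B₁ * ‖γ' t‖ ^ 2)) =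
        (1 / 2 : ℝ) * B₁ * ∫ t in a..b, ‖γ' t‖ ^ 2 := by
      rw [mul_assoc, ← intervalIntegral.integral_const_mul, ← intervalIntegral.integral_const_mul]
    rw [heq] at hmono
    unfold lagrangianAction
    have : B₁ * K ^ 2 / 8 * (b - a) ≤ (1 / 2 : ℝ) * B₁ * (K ^ 2 * (b - a)) := by
      have h0 : 0 ≤ B₁ * K ^ 2 * (b - a) := by positivity
      nlinarith [h0]
    calc B₁ * K ^ 2 / 8 * (b - a) ≤ (1 / 2 : ℝ) * B₁ * (K ^ 2 * (b - a)) := this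
      _ ≤ (1 / 2 : ℝ) * B₁ * ∫ t in a..b, ‖γ' t‖ ^ 2 := by
          apply mul_le_mul_of_nonneg_left hsq; positivity
      _ ≤ _ := hmono
  · -- upper bound
    rintro ⟨-, hmin⟩
    set w : EuclideanSpace ℝ (Fin n) := (b - a)⁻¹ • (γ b - γ a) with hw
    have hwnorm : ‖w‖ = K := by
      rw [hw, norm_smul, norm_inv, hnormba, Real.norm_eq_abs, abs_of_pos hba]
      field_simp
    set β : ℝ → EuclideanSpace ℝ (Fin n) := fun t => γ a + (t - a) • w with hβ
    have hβa : β a = γ a := by simp [hβ]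
    have hβb : β b = γ b := by
      simp only [hβ, hw, smul_smul, mul_inv_cancel₀ hba.ne', one_smul]
      abel
    have hAC : IsACWith β (fun _ => w) a b := by
      refine ⟨intervalIntegrable_const, fun t ht => ?_⟩
      rw [intervalIntegral.integral_const, hβa]
    have hβcont : Continuous β := by
      rw [hβ]
      exact continuous_const.add ((continuous_id.sub continuous_const).smul continuous_const)
    clear_value w β
    have hle := hmin β (fun _ => w) hAC hβa hβb
    rw [← hγ'def] at hle
    refine le_trans hle ?_
    have hLβint : IntervalIntegrable
        (fun t => (1 / 2 : ℝ) * h (β t) w w - V (β t) t) volume a b := by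
      apply Continuous.intervalIntegrable
      apply Continuous.sub
      · exact continuous_const.mul
          (hhcont.comp (hβcont.prodMk (continuous_const.prodMk continuous_const)))
      · exact hVcont.comp (hβcont.prodMk continuous_id)
    have hpt : ∀ t ∈ Icc a b, (1 / 2 : ℝ) * h (β t) w w - V (β t) t ≤
        (1 / 2 : ℝ) * B₂ * K ^ 2 - Vmin := by
      intro t _
      have h1 := (hbounds (β t) w).2
      have h2 := (hV (β t) t).1
      rw [hwnorm] at h1
      nlinarith
    have hmono := intervalIntegral.integral_mono_on hab.le hLβint intervalIntegrable_const hpt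
    unfold lagrangianAction
    rw [intervalIntegral.integral_const, smul_eq_mul, mul_comm] at hmono
    exact hmono
end
end

section
/- Let φ be a flow on a set X (φ₀ = id and φ_{s+t} = φ_s ∘ φ_t for all s,t ∈ ℝ) and let a : X × ℝ → ℝ be an additive cocycle over φ, i.e., a(x, s+t) = a(x,s) + a(φ_s(x), t) for all x ∈ X and s,t ∈ ℝ, such that t ↦ a(x,t) is continuous for each x. Then for all α > 0, β > 0 and x ∈ X: (1/α)·∫₀^α a(x, β + t) dt − (1/α)·∫₀^α a(x,t) dt = (1/α)·∫₀^β a(φ_t(x), α) dt. In particular, if a(y, α) > 0 for all y ∈ X, then, setting s̄(x) = (1/α)·∫₀^α a(x,t) dt, one has a(x,β) + s̄(φ_β(x)) − s̄(x) > 0 for all x ∈ X and β > 0. -/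
open Set MeasureTheory intervalIntegral

/-- **Fuller's averaging identity for additive cocycles (§3.2).**
Let `φ` be a flow on a set `X` and `a : X × ℝ → ℝ` an additive cocycle over `φ`
that is continuous in time. Then for all `α, β > 0` and `x ∈ X`,
`(1/α)∫₀^α a(x, β+t) dt − (1/α)∫₀^α a(x,t) dt = (1/α)∫₀^β a(φ_t x, α) dt`;
in particular, if `a(y, α) > 0` for all `y`, then with
`s̄(x) = (1/α)∫₀^α a(x,t) dt` one has `a(x,β) + s̄(φ_β x) − s̄(x) > 0`. -/
theorem cocycle_average_identity {X : Type*} (φ : ℝ → X → X)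
    (hφ0 : φ 0 = id) (hφ : ∀ s t : ℝ, φ (s + t) = φ s ∘ φ t)
    (a : X → ℝ → ℝ)
    (hcoc : ∀ (x : X) (s t : ℝ), a x (s + t) = a x s + a (φ s x) t)
    (hcont : ∀ x : X, Continuous (a x)) :
    ∀ α : ℝ, 0 < α →
      ((∀ β : ℝ, 0 < β → ∀ x : X,
        (1 / α) * (∫ t in (0:ℝ)..α, a x (β + t)) - (1 / α) * (∫ t in (0:ℝ)..α, a x t) =
          (1 / α) * ∫ t in (0:ℝ)..β, a (φ t x) α) ∧
      ((∀ y : X, 0 < a y α) → ∀ β : ℝ, 0 < β → ∀ x : X,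
        0 < a x β + ((1 / α) * ∫ t in (0:ℝ)..α, a (φ β x) t) -
          (1 / α) * ∫ t in (0:ℝ)..α, a x t)) := by
  intro α hα
  -- main identity (unscaled)
  have key : ∀ β : ℝ, ∀ x : X,
      (∫ t in (0:ℝ)..α, a x (β + t)) - (∫ t in (0:ℝ)..α, a x t) =
        ∫ t in (0:ℝ)..β, a (φ t x) α := by
    intro β x
    have hint : ∀ c d : ℝ, IntervalIntegrable (a x) volume c d :=
      fun c d => (hcont x).intervalIntegrable c d
    have h1 : (∫ t in (0:ℝ)..α, a x (β + t)) = ∫ u in β..(β + α), a x u := by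
      simpa using intervalIntegral.integral_comp_add_left (a := (0:ℝ)) (b := α) (a x) β
    have hE : (∫ t in (0:ℝ)..β, a (φ t x) α)
        = (∫ t in (0:ℝ)..β, a x (t + α)) - ∫ t in (0:ℝ)..β, a x t := by
      rw [← intervalIntegral.integral_sub]
      · congr 1; ext t
        have := hcoc x t α
        linarith
      · have : Continuous (fun t : ℝ => a x (t + α)) :=
          (hcont x).comp (continuous_id.add continuous_const)
        exact this.intervalIntegrable _ _
      · exact hint _ _
    have h2 : (∫ t in (0:ℝ)..β, a x (t + α)) = ∫ u in α..(β + α), a x u := by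
      simpa using intervalIntegral.integral_comp_add_right (a := (0:ℝ)) (b := β) (a x) α
    have hadd1 : (∫ u in (0:ℝ)..β, a x u) + (∫ u in β..(β + α), a x u)
        = ∫ u in (0:ℝ)..(β + α), a x u :=
      intervalIntegral.integral_add_adjacent_intervals (hint _ _) (hint _ _)
    have hadd2 : (∫ u in (0:ℝ)..α, a x u) + (∫ u in α..(α + β), a x u)
        = ∫ u in (0:ℝ)..(α + β), a x u :=
      intervalIntegral.integral_add_adjacent_intervals (hint _ _) (hint _ _)
    have hc : β + α = α + β := add_comm β α
    rw [h1, hE, h2]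
    rw [hc] at h1 h2 hadd1 ⊢
    linarith
  constructor
  · intro β hβ x
    rw [← key β x]
    ring
  · intro hpos β hβ x
    have hint : ∀ c d : ℝ, IntervalIntegrable (a x) volume c d :=
      fun c d => (hcont x).intervalIntegrable c d
    -- rewrite ∫₀^α a(φ_β x, t) using the cocycle property
    have h3 : (∫ t in (0:ℝ)..α, a (φ β x) t)
        = (∫ t in (0:ℝ)..α, a x (β + t)) - α * a x β := by
      have : (∫ t in (0:ℝ)..α, a (φ β x) t)
          = ∫ t in (0:ℝ)..α, (a x (β + t) - a x β) := by
        congr 1; ext t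
        have := hcoc x β t; linarith
      rw [this, intervalIntegral.integral_sub, intervalIntegral.integral_const]
      · simp [smul_eq_mul]
      · have : Continuous (fun t : ℝ => a x (β + t)) :=
          (hcont x).comp (continuous_const.add continuous_id)
        exact this.intervalIntegrable _ _
      · exact intervalIntegrable_const
    -- positivity of ∫₀^β a(φ_t x, α)
    have hposint : 0 < ∫ t in (0:ℝ)..β, a (φ t x) α := by
      have heq : (fun t : ℝ => a (φ t x) α) = fun t => a x (t + α) - a x t := by
        ext t; have := hcoc x t α; linarith
      have hcontf : Continuous fun t : ℝ => a (φ t x) α := by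
        rw [heq]
        exact ((hcont x).comp (continuous_id.add continuous_const)).sub (hcont x)
      exact intervalIntegral_pos_of_pos (hcontf.intervalIntegrable _ _)
        (fun t => hpos _) hβ
    have hk := key β x
    rw [h3] at *
    have hαne : α ≠ 0 := ne_of_gt hα
    have : (1 / α) * (∫ t in (0:ℝ)..β, a (φ t x) α) > 0 :=
      mul_pos (by positivity) hposint
    have expand : a x β + ((1 / α) * ((∫ t in (0:ℝ)..α, a x (β + t)) - α * a x β)) -
        (1 / α) * ∫ t in (0:ℝ)..α, a x t
        = (1 / α) * (∫ t in (0:ℝ)..α, a x (β + t)) - (1 / α) * ∫ t in (0:ℝ)..α, a x t := by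
      field_simp
      ring
    rw [expand]
    calc 0 < (1 / α) * (∫ t in (0:ℝ)..β, a (φ t x) α) := this
    _ = (1 / α) * (∫ t in (0:ℝ)..α, a x (β + t)) - (1 / α) * ∫ t in (0:ℝ)..α, a x t := by
        rw [← hk]; ring
end
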